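/- Let q' be an ideal of A_{q,n} generated by q−1 elements u_2, …, u_q of m whose residue classes in m/m² form a basis of the image of Ω_1 in m/m², where Ω_1 is the k-span of x_2, …, x_q. Then: (a) there is a unique k-algebra homomorphism φ : A_{q,n} → k[z]/(z^n) with φ(x_1) = z̄ and ker(φ) = q'; and (b) there is a unique k-linear map γ : Ω_1 → S, where S is the k-span of x_1², …, x_1^{n−1} in A_{q,n}, such that q' is generated by the elements x_2 − γ(x_2), …, x_q − γ(x_q). -/

import Mathlib

set_option synthInstance.maxHeartbeats 400000

noncomputable section

/-- The ring of `n`-nil polynomials `A_{q,n} = k[x_1,…,x_q]/m_0^n`. -/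
abbrev Aqn (k : Type) [Field k] (q n : ℕ) : Type :=
  MvPolynomial (Fin q) k ⧸
    (Ideal.span (Set.range (MvPolynomial.X : Fin q → MvPolynomial (Fin q) k))) ^ n

/-- The image of the variable `x_i` in `A_{q,n}`. -/
def xA (k : Type) [Field k] (q n : ℕ) (i : Fin q) : Aqn k q n :=
  Ideal.Quotient.mk _ (MvPolynomial.X i)

/-- The maximal ideal `m` of `A_{q,n}` generated by `x_1, …, x_q`. -/
def mA (k : Type) [Field k] (q n : ℕ) : Ideal (Aqn k q n) :=
  Ideal.span (Set.range (xA k q n))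

/-- `m²` viewed as a `k`-subspace of `A_{q,n}`. -/
def m2k (k : Type) [Field k] (q n : ℕ) : Submodule k (Aqn k q n) :=
  Submodule.restrictScalars k ((mA k q n) ^ 2)

/-- The `k`-linear span `Ω_1` of `x_2, …, x_q` in `A_{q,n}`. -/
def Omega1A (k : Type) [Field k] (q n : ℕ) [NeZero q] : Submodule k (Aqn k q n) :=
  Submodule.span k {y | ∃ i : Fin q, i ≠ 0 ∧ y = xA k q n i}

/-- The `k`-linear span `S` of `x_1², …, x_1^(n-1)` in `A_{q,n}`. -/
def SA (k : Type) [Field k] (q n : ℕ) [NeZero q] : Submodule k (Aqn k q n) :=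
  Submodule.span k {y | ∃ j : ℕ, 2 ≤ j ∧ j ≤ n - 1 ∧ y = xA k q n 0 ^ j}

/-!
Since the classes of the `u_i` span the image of `Ω_1` in `m/m²`, every `x_i` with `i ≥ 2` lies
in `q' + m²`. Multiplying out gives `m^s ⊆ q' + k x_1^s + m^(s+1)`, so, `m` being nilpotent,
`x_i ≡ p_i(x_1) mod q'` for polynomials `p_i` in the span of `X², …, X^(n-1)`. Let `J ⊆ q'` be
the ideal generated by the `x_i - p_i(x_1)`. Independence of the classes of the `u_i` in `m/m²`
gives `q' ∩ m² ⊆ m q'`, hence `q' ⊆ J + m q'`, and `q' = J` by Nakayama.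

Modulo `J` the algebra is generated by `x_1`, and the homomorphism `φ` with `x_1 ↦ z̄`,
`x_i ↦ p_i(z̄)` has kernel exactly `J`: a polynomial in `x_1` that vanishes modulo `z^n` vanishes
in `A_{q,n}`. The map `γ` is `φ` followed by `z̄ ↦ x_1`. Both uniqueness statements come from
`x_1` generating `A_{q,n}/q'` and from `φ` being injective on `S`, whose elements are polynomials
of degree `< n` in `x_1`.
-/

open Polynomial

section Nilpotent

variable {R : Type*} [CommRing R]

theorem Ideal.le_jacobson_bot_of_pow_eq_bot {M : Ideal R} {n : ℕ} (hM : M ^ n = ⊥) :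
    M ≤ (⊥ : Ideal R).jacobson := fun _ hx =>
  Ideal.radical_le_jacobson ⟨n, hM ▸ Ideal.pow_mem_pow hx n⟩

theorem Ideal.le_of_le_sup_mul_of_pow_eq_bot {M I J : Ideal R} {n : ℕ} (hM : M ^ n = ⊥)
    (hI : I.FG) (h : I ≤ J ⊔ M * I) : I ≤ J :=
  Submodule.le_of_le_smul_of_le_jacobson_bot hI (Ideal.le_jacobson_bot_of_pow_eq_bot hM) h

end Nilpotent

section Residue

variable {k R : Type*} [CommRing k] [CommRing R] [Algebra k R] {M : Ideal R}

theorem Ideal.restrictScalars_span_le_span_sup_mul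
    (hM : ∀ a : R, ∃ c : k, a - algebraMap k R c ∈ M) (G : Set R) :
    (Ideal.span G).restrictScalars k ≤
      Submodule.span k G ⊔ (M * Ideal.span G).restrictScalars k := by
  intro y hy
  induction hy using Submodule.span_induction with
  | mem g hg => exact Submodule.mem_sup_left (Submodule.subset_span hg)
  | zero => exact zero_mem _
  | add y z _ _ hy hz => exact add_mem hy hz
  | smul a y hyG hy =>
    obtain ⟨c, hc⟩ := hM a
    have hdecomp : a • y = c • y + (a - algebraMap k R c) * y := by
      rw [smul_eq_mul, Algebra.smul_def]; ring
    rw [hdecomp]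
    exact add_mem (Submodule.smul_mem _ c hy)
      (Submodule.mem_sup_right (Ideal.mul_mem_mul hc hyG))

theorem Ideal.span_range_inf_sq_le_mul {ι : Type*} [Fintype ι]
    (hM : ∀ a : R, ∃ c : k, a - algebraMap k R c ∈ M) {u : ι → R} (hu : ∀ i, u i ∈ M)
    (hind : LinearIndependent k fun i => ((M ^ 2).restrictScalars k).mkQ (u i)) :
    Ideal.span (Set.range u) ⊓ M ^ 2 ≤ M * Ideal.span (Set.range u) := by
  rintro y ⟨hy, hy2⟩
  obtain ⟨v, hv, w, hw, rfl⟩ := Submodule.mem_sup.1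
    (Ideal.restrictScalars_span_le_span_sup_mul hM _ hy)
  obtain ⟨c, rfl⟩ := (Submodule.mem_span_range_iff_exists_fun k).1 hv
  have hwM : w ∈ M ^ 2 := by
    rw [sq]; exact Ideal.mul_mono_right ((Ideal.span_le).2 (Set.range_subset_iff.2 hu)) hw
  have hc : c = 0 := by
    refine funext (Fintype.linearIndependent_iff.1 hind c ?_)
    have h0 : ((M ^ 2).restrictScalars k).mkQ (∑ i, c i • u i) = 0 := by
      rw [Submodule.mkQ_apply, Submodule.Quotient.mk_eq_zero]
      simpa using sub_mem hy2 hwM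
    simpa only [map_sum, map_smul] using h0
  simp only [hc, Pi.zero_apply, zero_smul, Finset.sum_const_zero, zero_add]
  exact hw

end Residue

section Filtration

variable {k R : Type*} [CommRing k] [CommRing R] [Algebra k R] {I M : Ideal R} {x : R}

theorem Ideal.pow_mul_mem_sup_span_pow_sup (hx : x ∈ M)
    (h : M.restrictScalars k ≤ I.restrictScalars k ⊔ k ∙ x ⊔ (M ^ 2).restrictScalars k)
    (t : ℕ) {b : R} (hb : b ∈ M) :
    x ^ t * b ∈ I.restrictScalars k ⊔ k ∙ x ^ (t + 1) ⊔ (M ^ (t + 2)).restrictScalars k := by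
  obtain ⟨y, hy, r, hr, rfl⟩ := Submodule.mem_sup.1 (h hb)
  obtain ⟨i, hi, y', hy', rfl⟩ := Submodule.mem_sup.1 hy
  obtain ⟨c, rfl⟩ := Submodule.mem_span_singleton.1 hy'
  rw [mul_add, mul_add, mul_smul_comm, ← pow_succ]
  refine add_mem (add_mem ?_ ?_) ?_
  · exact Submodule.mem_sup_left (Submodule.mem_sup_left (I.mul_mem_left _ hi))
  · exact Submodule.mem_sup_left (Submodule.mem_sup_right
      (Submodule.smul_mem _ c (Submodule.mem_span_singleton_self _)))
  · refine Submodule.mem_sup_right ?_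
    rw [pow_add]
    exact Ideal.mul_mem_mul (Ideal.pow_mem_pow hx t) hr

theorem Ideal.restrictScalars_pow_le_sup_span_pow_sup (hx : x ∈ M)
    (h : M.restrictScalars k ≤ I.restrictScalars k ⊔ k ∙ x ⊔ (M ^ 2).restrictScalars k)
    {s : ℕ} (hs : 1 ≤ s) :
    (M ^ s).restrictScalars k ≤
      I.restrictScalars k ⊔ k ∙ x ^ s ⊔ (M ^ (s + 1)).restrictScalars k := by
  induction s, hs using Nat.le_induction with
  | base => simpa using h
  | succ t _ ih =>
    intro a ha
    rw [Submodule.restrictScalars_mem, pow_succ] at ha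
    refine Submodule.mul_induction_on ha (fun a ha b hb => ?_) (fun _ _ => add_mem)
    obtain ⟨y, hy, r, hr, rfl⟩ := Submodule.mem_sup.1 (ih ha)
    obtain ⟨i, hi, y', hy', rfl⟩ := Submodule.mem_sup.1 hy
    obtain ⟨c, rfl⟩ := Submodule.mem_span_singleton.1 hy'
    rw [add_mul, add_mul, smul_mul_assoc]
    refine add_mem (add_mem ?_ (Submodule.smul_mem _ c
      (Ideal.pow_mul_mem_sup_span_pow_sup hx h t hb))) ?_
    · exact Submodule.mem_sup_left (Submodule.mem_sup_left (I.mul_mem_right _ hi))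
    · exact Submodule.mem_sup_right (by rw [pow_succ _ (t + 1)]; exact Ideal.mul_mem_mul hr hb)

theorem Ideal.restrictScalars_pow_le_sup_span_pow_Ico {n : ℕ} (hMn : M ^ n = ⊥) (hx : x ∈ M)
    (h : M.restrictScalars k ≤ I.restrictScalars k ⊔ k ∙ x ⊔ (M ^ 2).restrictScalars k)
    {s : ℕ} (hs : 1 ≤ s) :
    (M ^ s).restrictScalars k ≤
      I.restrictScalars k ⊔ Submodule.span k ((x ^ ·) '' Set.Ico s n) := by
  induction hd : n - s generalizing s with
  | zero =>
    have : M ^ s = ⊥ := eq_bot_mono (Ideal.pow_le_pow_right (by omega)) hMn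
    simp [this]
  | succ d ih =>
    refine (Ideal.restrictScalars_pow_le_sup_span_pow_sup hx h hs).trans
      (sup_le (sup_le le_sup_left ?_) ((ih (by omega) (by omega)).trans ?_))
    · exact le_sup_of_le_right (Submodule.span_mono (by
        rw [Set.singleton_subset_iff]; exact ⟨s, ⟨le_rfl, by omega⟩, rfl⟩))
    · exact sup_le_sup_left (Submodule.span_mono
        (Set.image_mono (Set.Ico_subset_Ico_left (Nat.le_succ s)))) _

end Filtration

theorem Submodule.sup_eq_span_range_sup_of_basis {K E ι : Type*} [Ring K] [AddCommGroup E]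
    [Module K E] {V N : Submodule K E} (b : Module.Basis ι K (V.map N.mkQ)) {u : ι → E}
    (hb : ∀ i, (b i : E ⧸ N) = N.mkQ (u i)) :
    V ⊔ N = Submodule.span K (Set.range u) ⊔ N := by
  have hmap : V.map N.mkQ = (Submodule.span K (Set.range u)).map N.mkQ := by
    rw [← Submodule.map_subtype_top (V.map N.mkQ), ← b.span_eq, Submodule.map_span,
      Submodule.map_span, ← Set.range_comp, ← Set.range_comp]
    exact congrArg _ (congrArg _ (funext hb))
  rw [sup_comm, ← Submodule.comap_map_mkQ, hmap, Submodule.comap_map_mkQ, sup_comm]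

theorem Module.Basis.linearIndependent_mkQ {K E ι : Type*} [Ring K] [AddCommGroup E]
    [Module K E] {V N : Submodule K E} (b : Module.Basis ι K (V.map N.mkQ)) {u : ι → E}
    (hb : ∀ i, (b i : E ⧸ N) = N.mkQ (u i)) :
    LinearIndependent K fun i => N.mkQ (u i) := by
  rw [show (fun i => N.mkQ (u i)) = (V.map N.mkQ).subtype ∘ b from funext fun i => (hb i).symm]
  exact b.linearIndependent.map' _ (Submodule.ker_subtype _)

theorem Polynomial.span_X_pow_Ico_le_degreeLT {R : Type*} [CommRing R] (a n : ℕ) :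
    Submodule.span R ((X ^ ·) '' Set.Ico a n : Set R[X]) ≤ degreeLT R n := by
  rw [Submodule.span_le]
  rintro _ ⟨j, hj, rfl⟩
  rw [SetLike.mem_coe, mem_degreeLT]
  exact (degree_X_pow_le j).trans_lt (by exact_mod_cast hj.2)

theorem Polynomial.X_dvd_of_mem_span_X_pow_Ico {R : Type*} [CommRing R] {a n : ℕ} (ha : 1 ≤ a)
    {f : R[X]} (hf : f ∈ Submodule.span R ((X ^ ·) '' Set.Ico a n)) : X ∣ f := by
  have hle : Submodule.span R ((X ^ ·) '' Set.Ico a n : Set R[X]) ≤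
      (Ideal.span {X}).restrictScalars R := by
    rw [Submodule.span_le]
    rintro _ ⟨j, hj, rfl⟩
    exact Ideal.mem_span_singleton.2 (dvd_pow_self X (by grind))
  exact Ideal.mem_span_singleton.1 (hle hf)

theorem Polynomial.span_pow_image_eq_map_aeval {R A : Type*} [CommRing R] [CommRing A]
    [Algebra R A] (x : A) (s : Set ℕ) :
    Submodule.span R ((x ^ ·) '' s) =
      (Submodule.span R ((X ^ ·) '' s)).map (aeval x).toLinearMap := by
  rw [Submodule.map_span, Set.image_image]
  simp

abbrev TruncPoly (k : Type*) [CommRing k] (n : ℕ) : Type _ := k[X] ⧸ Ideal.span {(X : k[X]) ^ n}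

namespace TruncPoly

variable {k : Type*} [CommRing k] {n : ℕ}

abbrev z : TruncPoly k n := Ideal.Quotient.mk _ X

theorem aeval_z (f : k[X]) : aeval (z : TruncPoly k n) f = Ideal.Quotient.mk _ f := by
  rw [← Ideal.Quotient.mkₐ_eq_mk k]
  conv_rhs => rw [← aeval_X_left_apply f, ← aeval_algHom_apply]
  rfl

theorem z_pow_eq_zero : (z : TruncPoly k n) ^ n = 0 := by
  rw [← map_pow, Ideal.Quotient.eq_zero_iff_mem]
  exact Ideal.mem_span_singleton_self _

theorem injOn_mk_degreeLT [IsDomain k] :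
    Set.InjOn (Ideal.Quotient.mk (Ideal.span {(X : k[X]) ^ n})) (degreeLT k n) := by
  intro f hf g hg hfg
  rw [← sub_eq_zero, ← map_sub, Ideal.Quotient.eq_zero_iff_mem,
    Ideal.mem_span_singleton] at hfg
  refine sub_eq_zero.1 (eq_zero_of_dvd_of_degree_lt hfg ?_)
  rw [degree_X_pow]
  exact mem_degreeLT.1 (sub_mem hf hg)

variable {A : Type*} [CommRing A] [Algebra k A]

def lift (x : A) (hx : x ^ n = 0) : TruncPoly k n →ₐ[k] A :=
  Ideal.Quotient.liftₐ _ (aeval x) fun f hf => by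
    obtain ⟨g, rfl⟩ := Ideal.mem_span_singleton'.1 hf
    simp [hx]

theorem lift_mk (x : A) (hx : x ^ n = 0) (f : k[X]) :
    lift x hx (Ideal.Quotient.mk _ f : TruncPoly k n) = aeval x f := rfl

theorem lift_z (x : A) (hx : x ^ n = 0) : lift x hx (z : TruncPoly k n) = x :=
  (lift_mk x hx X).trans (aeval_X x)

end TruncPoly

section QuotientGeneratedBy

variable {k A B : Type*} [CommRing k] [CommRing A] [Algebra k A] [CommRing B] [Algebra k B]
  {J : Ideal A} {x : A}

theorem exists_sub_aeval_mem_of_adjoin_eq_top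
    (hJ : Algebra.adjoin k {Ideal.Quotient.mk J x} = ⊤) (a : A) :
    ∃ f : k[X], a - aeval x f ∈ J := by
  have ha : Ideal.Quotient.mk J a ∈ (aeval (R := k) (Ideal.Quotient.mk J x)).range := by
    rw [← Algebra.adjoin_singleton_eq_range_aeval, hJ]
    exact Algebra.mem_top
  obtain ⟨f, hf⟩ := ha
  refine ⟨f, Ideal.Quotient.eq.1 ?_⟩
  rw [← hf]
  exact aeval_algHom_apply (Ideal.Quotient.mkₐ k J) x f

theorem AlgHom.eq_of_adjoin_mk_eq_top (hJ : Algebra.adjoin k {Ideal.Quotient.mk J x} = ⊤)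
    {φ ψ : A →ₐ[k] B} (hφ : J ≤ RingHom.ker φ) (hψ : J ≤ RingHom.ker ψ) (h : φ x = ψ x) :
    φ = ψ := by
  ext a
  obtain ⟨f, hf⟩ := exists_sub_aeval_mem_of_adjoin_eq_top hJ a
  have hφf := RingHom.mem_ker.1 (hφ hf)
  have hψf := RingHom.mem_ker.1 (hψ hf)
  rw [map_sub, sub_eq_zero, ← aeval_algHom_apply] at hφf hψf
  rw [hφf, hψf, h]

theorem ker_eq_of_adjoin_mk_eq_top (hJ : Algebra.adjoin k {Ideal.Quotient.mk J x} = ⊤) {n : ℕ}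
    (hx : x ^ n = 0) {Φ : A →ₐ[k] TruncPoly k n} (hΦ : Φ x = TruncPoly.z)
    (hJΦ : J ≤ RingHom.ker Φ) : RingHom.ker Φ = J := by
  refine le_antisymm (fun a ha => ?_) hJΦ
  obtain ⟨f, hf⟩ := exists_sub_aeval_mem_of_adjoin_eq_top hJ a
  have hf0 : Ideal.Quotient.mk _ f = (0 : TruncPoly k n) := by
    rw [← TruncPoly.aeval_z, ← hΦ, aeval_algHom_apply, ← sub_sub_cancel a (aeval x f),
      map_sub, RingHom.mem_ker.1 ha, RingHom.mem_ker.1 (hJΦ hf), sub_zero]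
  have : aeval x f = 0 := by rw [← TruncPoly.lift_mk x hx, hf0, map_zero]
  simpa [this] using hf

end QuotientGeneratedBy

section Aqn

variable {k : Type} [Field k] {q n : ℕ}

theorem mA_eq_map :
    mA k q n = (MvPolynomial.idealOfVars (Fin q) k).map (Ideal.Quotient.mk _) := by
  rw [Ideal.map_span, ← Set.range_comp]
  rfl

theorem mA_pow_eq_bot : mA k q n ^ n = ⊥ := by
  rw [mA_eq_map, ← Ideal.map_pow, Ideal.map_quotient_self]

theorem xA_mem_mA (i : Fin q) : xA k q n i ∈ mA k q n := Ideal.subset_span ⟨i, rfl⟩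

theorem xA_pow_eq_zero (i : Fin q) : xA k q n i ^ n = 0 := by
  simpa [mA_pow_eq_bot] using Ideal.pow_mem_pow (xA_mem_mA (k := k) (n := n) i) n

theorem exists_sub_algebraMap_mem_mA (a : Aqn k q n) :
    ∃ c : k, a - algebraMap k (Aqn k q n) c ∈ mA k q n := by
  obtain ⟨p, rfl⟩ := Ideal.Quotient.mk_surjective a
  refine ⟨MvPolynomial.constantCoeff p, ?_⟩
  rw [mA_eq_map, ← Ideal.Quotient.mkₐ_eq_mk k, ← AlgHom.commutes (Ideal.Quotient.mkₐ k _),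
    ← map_sub]
  refine Ideal.mem_map_of_mem _ ?_
  rw [← pow_one (MvPolynomial.idealOfVars _ _), MvPolynomial.mem_pow_idealOfVars_iff']
  intro x hx
  obtain rfl : x = 0 := by simpa [Finsupp.degree_eq_zero_iff] using hx
  simp [MvPolynomial.constantCoeff_eq]

theorem adjoin_range_xA : Algebra.adjoin k (Set.range (xA k q n)) = ⊤ := by
  rw [show Set.range (xA k q n) = Ideal.Quotient.mkₐ k _ '' Set.range MvPolynomial.X by
      rw [← Set.range_comp]; rfl,
    Algebra.adjoin_image, MvPolynomial.adjoin_range_X, Algebra.map_top,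
    AlgHom.range_eq_top]
  exact Ideal.Quotient.mkₐ_surjective k _

def Aqn.lift {B : Type*} [CommRing B] [Algebra k B] (g : Fin q → B) {I : Ideal B}
    (hI : I ^ n = ⊥) (hg : ∀ i, g i ∈ I) : Aqn k q n →ₐ[k] B :=
  Ideal.Quotient.liftₐ _ (MvPolynomial.aeval g) fun a ha => by
    have hle : (MvPolynomial.idealOfVars (Fin q) k).map (MvPolynomial.aeval g) ≤ I := by
      rw [Ideal.map_span, Ideal.span_le]
      rintro _ ⟨_, ⟨i, rfl⟩, rfl⟩
      simpa using hg i
    have hmem : MvPolynomial.aeval g a ∈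
        ((MvPolynomial.idealOfVars (Fin q) k).map (MvPolynomial.aeval g)) ^ n := by
      rw [← Ideal.map_pow]
      exact Ideal.mem_map_of_mem _ ha
    simpa [hI] using Ideal.pow_right_mono hle n hmem

theorem Aqn.lift_xA {B : Type*} [CommRing B] [Algebra k B] (g : Fin q → B) {I : Ideal B}
    (hI : I ^ n = ⊥) (hg : ∀ i, g i ∈ I) (i : Fin q) : Aqn.lift g hI hg (xA k q n i) = g i :=
  MvPolynomial.aeval_X g i

end Aqn

def xOmega1A (k : Type) [Field k] (q n : ℕ) [NeZero q] (i : {i : Fin q // i ≠ 0}) :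
    Omega1A k q n :=
  ⟨xA k q n i.1, Submodule.subset_span ⟨i.1, i.2, rfl⟩⟩

section NormalForm

variable {k : Type} [Field k] {q n : ℕ} [NeZero q]

theorem span_range_xOmega1A : Submodule.span k (Set.range (xOmega1A k q n)) = ⊤ := by
  apply Submodule.map_injective_of_injective (Omega1A k q n).injective_subtype
  rw [Submodule.map_span, ← Set.range_comp, Submodule.map_subtype_top]
  conv_rhs => rw [Omega1A]
  congr 1
  ext y
  simp [xOmega1A, eq_comm]

theorem SA_eq_span_pow_Ico : SA k q n = Submodule.span k ((xA k q n 0 ^ ·) '' Set.Ico 2 n) := by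
  rw [SA]
  congr 1
  ext y
  simp only [Set.mem_image, Set.mem_Ico]
  constructor
  · rintro ⟨j, h2, hn, rfl⟩; exact ⟨j, ⟨h2, by omega⟩, rfl⟩
  · rintro ⟨j, ⟨h2, hn⟩, rfl⟩; exact ⟨j, h2, by omega, rfl⟩

theorem SA_le_m2k : SA k q n ≤ m2k k q n := by
  rw [SA_eq_span_pow_Ico, Submodule.span_le]
  rintro _ ⟨j, hj, rfl⟩
  exact Ideal.pow_le_pow_right hj.1 (Ideal.pow_mem_pow (xA_mem_mA 0) j)

theorem aeval_xA_zero_mem_SA {f : k[X]}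
    (hf : f ∈ Submodule.span k ((X ^ ·) '' Set.Ico 2 n)) :
    aeval (xA k q n 0) f ∈ SA k q n := by
  rw [SA_eq_span_pow_Ico, span_pow_image_eq_map_aeval]
  exact Submodule.mem_map_of_mem hf

theorem injOn_SA {Φ : Aqn k q n →ₐ[k] TruncPoly k n} (hΦ : Φ (xA k q n 0) = TruncPoly.z) :
    Set.InjOn Φ (SA k q n) := by
  rintro _ hs _ ht hst
  rw [SA_eq_span_pow_Ico, span_pow_image_eq_map_aeval] at hs ht
  obtain ⟨f, hf, rfl⟩ := hs
  obtain ⟨g, hg, rfl⟩ := ht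
  simp only [AlgHom.toLinearMap_apply, ← aeval_algHom_apply, hΦ, TruncPoly.aeval_z] at hst
  rw [TruncPoly.injOn_mk_degreeLT (span_X_pow_Ico_le_degreeLT 2 n hf)
    (span_X_pow_Ico_le_degreeLT 2 n hg) hst]

theorem mA_le_sup_span_xA_zero_sup {q' : Ideal (Aqn k q n)}
    (h : Omega1A k q n ≤ q'.restrictScalars k ⊔ m2k k q n) :
    (mA k q n).restrictScalars k ≤ q'.restrictScalars k ⊔ k ∙ xA k q n 0 ⊔ m2k k q n := by
  refine (Ideal.restrictScalars_span_le_span_sup_mul exists_sub_algebraMap_mem_mA _).trans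
    (sup_le ?_ ?_)
  · rw [Submodule.span_le]
    rintro _ ⟨i, rfl⟩
    by_cases hi : i = 0
    · subst hi
      exact Submodule.mem_sup_left (Submodule.mem_sup_right (Submodule.mem_span_singleton_self _))
    · exact (sup_le_sup_right le_sup_left _ : q'.restrictScalars k ⊔ m2k k q n ≤ _)
        (h (Submodule.subset_span ⟨i, hi, rfl⟩))
  · change (mA k q n * mA k q n).restrictScalars k ≤ _
    rw [show mA k q n * mA k q n = mA k q n ^ 2 from (sq (mA k q n)).symm]
    exact le_sup_right

theorem exists_xA_sub_aeval_mem {q' : Ideal (Aqn k q n)}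
    (h : Omega1A k q n ≤ q'.restrictScalars k ⊔ m2k k q n) (i : {i : Fin q // i ≠ 0}) :
    ∃ f ∈ Submodule.span k ((X ^ ·) '' Set.Ico 2 n : Set k[X]),
      xA k q n i - aeval (xA k q n 0) f ∈ q' := by
  have hm2 : m2k k q n ≤ q'.restrictScalars k ⊔ SA k q n := by
    rw [SA_eq_span_pow_Ico]
    exact Ideal.restrictScalars_pow_le_sup_span_pow_Ico mA_pow_eq_bot (xA_mem_mA 0)
      (mA_le_sup_span_xA_zero_sup h) one_le_two
  have hx := sup_le le_sup_left hm2 (h (Submodule.subset_span ⟨i, i.2, rfl⟩))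
  rw [SA_eq_span_pow_Ico, span_pow_image_eq_map_aeval] at hx
  obtain ⟨y, hy, _, ⟨f, hf, rfl⟩, hyf⟩ := Submodule.mem_sup.1 hx
  exact ⟨f, hf, by rw [← hyf]; simpa using hy⟩

theorem span_range_le_span_xA_sub_aeval {u : {i : Fin q // i ≠ 0} → Aqn k q n}
    (hu : ∀ i, u i ∈ mA k q n) (hind : LinearIndependent k fun i => (m2k k q n).mkQ (u i))
    (hsup : Omega1A k q n ⊔ m2k k q n = Submodule.span k (Set.range u) ⊔ m2k k q n)
    {p : {i : Fin q // i ≠ 0} → k[X]}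
    (hp : ∀ i, p i ∈ Submodule.span k ((X ^ ·) '' Set.Ico 2 n))
    (hpq : ∀ i, xA k q n i.1 - aeval (xA k q n 0) (p i) ∈ Ideal.span (Set.range u)) :
    Ideal.span (Set.range u) ≤
      Ideal.span (Set.range fun i => xA k q n i.1 - aeval (xA k q n 0) (p i)) := by
  set J := Ideal.span (Set.range fun i => xA k q n i.1 - aeval (xA k q n 0) (p i))
  have hJ : J ≤ Ideal.span (Set.range u) := Ideal.span_le.2 (Set.range_subset_iff.2 hpq)
  have hΩ : Omega1A k q n ≤ J.restrictScalars k ⊔ m2k k q n := by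
    rw [Omega1A, Submodule.span_le]
    rintro _ ⟨i, hi, rfl⟩
    rw [← sub_add_cancel (xA k q n i) (aeval (xA k q n 0) (p ⟨i, hi⟩))]
    exact add_mem (Submodule.mem_sup_left (Ideal.subset_span ⟨⟨i, hi⟩, rfl⟩))
      (Submodule.mem_sup_right (SA_le_m2k (aeval_xA_zero_mem_SA (hp _))))
  refine Ideal.le_of_le_sup_mul_of_pow_eq_bot mA_pow_eq_bot (Submodule.fg_span (Set.finite_range u))
    (Ideal.span_le.2 ?_)
  rintro _ ⟨i, rfl⟩
  have hui : u i ∈ J.restrictScalars k ⊔ m2k k q n :=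
    sup_le hΩ le_sup_right (hsup ▸ Submodule.mem_sup_left (Submodule.subset_span ⟨i, rfl⟩))
  obtain ⟨j, hj, t, ht, hjt⟩ := Submodule.mem_sup.1 hui
  have htq : t ∈ Ideal.span (Set.range u) := by
    rw [← add_sub_cancel_left j t, hjt]
    exact sub_mem (Ideal.subset_span ⟨i, rfl⟩) (hJ hj)
  rw [← hjt]
  exact add_mem (Submodule.mem_sup_left hj) (Submodule.mem_sup_right
    (Ideal.span_range_inf_sq_le_mul exists_sub_algebraMap_mem_mA hu hind ⟨htq, ht⟩))

theorem exists_algHom_xA_eq {p : {i : Fin q // i ≠ 0} → k[X]} (hp : ∀ i, X ∣ p i) :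
    ∃ Φ : Aqn k q n →ₐ[k] TruncPoly k n, Φ (xA k q n 0) = TruncPoly.z ∧
      ∀ i : {i : Fin q // i ≠ 0}, Φ (xA k q n i.1) = aeval TruncPoly.z (p i) := by
  have hz : Ideal.span {(TruncPoly.z : TruncPoly k n)} ^ n = ⊥ := by
    rw [Ideal.span_singleton_pow, TruncPoly.z_pow_eq_zero, Ideal.span_singleton_eq_bot]
  let g : Fin q → TruncPoly k n := fun i =>
    if h : i = 0 then TruncPoly.z else aeval TruncPoly.z (p ⟨i, h⟩)
  have hg : ∀ i, g i ∈ Ideal.span {TruncPoly.z} := by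
    intro i
    by_cases h : i = 0
    · simp [g, h]
    · simpa [g, h, Ideal.mem_span_singleton] using _root_.map_dvd (aeval TruncPoly.z) (hp ⟨i, h⟩)
  refine ⟨Aqn.lift g hz hg, ?_, fun i => ?_⟩
  · rw [Aqn.lift_xA]; exact dif_pos rfl
  · rw [Aqn.lift_xA]; exact dif_neg i.2

theorem adjoin_mk_xA_zero_eq_top {J : Ideal (Aqn k q n)}
    (h : ∀ i : {i : Fin q // i ≠ 0}, ∃ f : k[X], xA k q n i.1 - aeval (xA k q n 0) f ∈ J) :
    Algebra.adjoin k {Ideal.Quotient.mk J (xA k q n 0)} = ⊤ := by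
  rw [eq_top_iff, ← (AlgHom.range_eq_top _).2 (Ideal.Quotient.mkₐ_surjective k J),
    ← Algebra.map_top, ← adjoin_range_xA, ← Algebra.adjoin_image, Algebra.adjoin_le_iff]
  rintro _ ⟨_, ⟨i, rfl⟩, rfl⟩
  by_cases hi : i = 0
  · subst hi; exact Algebra.subset_adjoin rfl
  · obtain ⟨f, hf⟩ := h ⟨i, hi⟩
    rw [Ideal.Quotient.mkₐ_eq_mk, Ideal.Quotient.eq.2 hf, ← Ideal.Quotient.mkₐ_eq_mk k,
      ← aeval_algHom_apply]
    exact aeval_mem_adjoin_singleton k _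

theorem existsUnique_algHom_ker_eq {q' : Ideal (Aqn k q n)} {p : {i : Fin q // i ≠ 0} → k[X]}
    (hp : ∀ i, X ∣ p i)
    (hq' : q' = Ideal.span (Set.range fun i => xA k q n i.1 - aeval (xA k q n 0) (p i))) :
    ∃! Φ : Aqn k q n →ₐ[k] TruncPoly k n,
      Φ (xA k q n 0) = TruncPoly.z ∧ RingHom.ker Φ = q' := by
  obtain ⟨Φ, hΦ0, hΦ⟩ := exists_algHom_xA_eq (n := n) hp
  have hadj : Algebra.adjoin k {Ideal.Quotient.mk q' (xA k q n 0)} = ⊤ :=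
    adjoin_mk_xA_zero_eq_top fun i => ⟨p i, by rw [hq']; exact Ideal.subset_span ⟨i, rfl⟩⟩
  have hle : q' ≤ RingHom.ker Φ := by
    rw [hq', Ideal.span_le]
    rintro _ ⟨i, rfl⟩
    rw [SetLike.mem_coe, RingHom.mem_ker, map_sub, ← aeval_algHom_apply, hΦ0, hΦ, sub_self]
  exact ⟨Φ, ⟨hΦ0, ker_eq_of_adjoin_mk_eq_top hadj (xA_pow_eq_zero 0) hΦ0 hle⟩,
    fun ψ hψ => AlgHom.eq_of_adjoin_mk_eq_top hadj hψ.2.ge hle (hψ.1.trans hΦ0.symm)⟩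

theorem existsUnique_linearMap_SA {q' : Ideal (Aqn k q n)} {Φ : Aqn k q n →ₐ[k] TruncPoly k n}
    (hΦ0 : Φ (xA k q n 0) = TruncPoly.z) (hker : RingHom.ker Φ = q')
    {p : {i : Fin q // i ≠ 0} → k[X]}
    (hp : ∀ i, p i ∈ Submodule.span k ((X ^ ·) '' Set.Ico 2 n))
    (hq' : q' = Ideal.span (Set.range fun i => xA k q n i.1 - aeval (xA k q n 0) (p i))) :
    ∃! γ : Omega1A k q n →ₗ[k] Aqn k q n,
      (∀ w, γ w ∈ SA k q n) ∧
      q' = Ideal.span {y | ∃ i : {i : Fin q // i ≠ 0}, y = xA k q n i.1 - γ (xOmega1A k q n i)} := by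
  have hΦ : ∀ i : {i : Fin q // i ≠ 0}, Φ (xA k q n i.1) = Φ (aeval (xA k q n 0) (p i)) := by
    intro i
    have hi : xA k q n i.1 - aeval (xA k q n 0) (p i) ∈ RingHom.ker Φ := by
      rw [hker, hq']; exact Ideal.subset_span ⟨i, rfl⟩
    rwa [RingHom.mem_ker, map_sub, sub_eq_zero] at hi
  set ψ := (TruncPoly.lift (xA k q n 0) (xA_pow_eq_zero 0)).comp Φ
  have hψ : ∀ i : {i : Fin q // i ≠ 0}, ψ (xA k q n i.1) = aeval (xA k q n 0) (p i) := by
    intro i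
    rw [AlgHom.comp_apply, hΦ, ← AlgHom.comp_apply, ← aeval_algHom_apply, AlgHom.comp_apply, hΦ0,
      TruncPoly.lift_z]
  have hψS : ∀ i : {i : Fin q // i ≠ 0}, ψ (xA k q n i.1) ∈ SA k q n := fun i => by
    rw [hψ]; exact aeval_xA_zero_mem_SA (hp i)
  refine ⟨ψ.toLinearMap ∘ₗ (Omega1A k q n).subtype, ⟨fun w => ?_, ?_⟩, ?_⟩
  · have hle : Omega1A k q n ≤ (SA k q n).comap ψ.toLinearMap := by
      rw [Omega1A, Submodule.span_le]
      rintro _ ⟨i, hi, rfl⟩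
      exact hψS ⟨i, hi⟩
    exact hle w.2
  · rw [hq']
    congr 1
    ext y
    simp [xOmega1A, hψ, eq_comm]
  · rintro γ ⟨hγS, hγq⟩
    refine LinearMap.ext_on_range span_range_xOmega1A fun i => injOn_SA hΦ0 (hγS _) (hψS i) ?_
    have hγi : xA k q n i.1 - γ (xOmega1A k q n i) ∈ RingHom.ker Φ := by
      rw [hker, hγq]; exact Ideal.subset_span ⟨i, rfl⟩
    rw [RingHom.mem_ker, map_sub, sub_eq_zero] at hγi
    change Φ (γ _) = Φ (ψ (xA k q n i.1))
    rw [← hγi, hψ, ← hΦ]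

end NormalForm

theorem nil_parameter_ideal_normal_form_general (k : Type) [Field k] (q n : ℕ) [NeZero q]
    (q' : Ideal (Aqn k q n))
    (u : {i : Fin q // i ≠ 0} → Aqn k q n)
    (hu : ∀ i, u i ∈ mA k q n)
    (hq' : q' = Ideal.span (Set.range u))
    (b : Module.Basis {i : Fin q // i ≠ 0} k (Submodule.map (m2k k q n).mkQ (Omega1A k q n)))
    (hb : ∀ i, (b i : Aqn k q n ⧸ m2k k q n) = (m2k k q n).mkQ (u i)) :
    (∃! φ : Aqn k q n →ₐ[k] (Polynomial k ⧸ Ideal.span {(Polynomial.X : Polynomial k) ^ n}),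
      φ (xA k q n 0) = Ideal.Quotient.mk _ Polynomial.X ∧ RingHom.ker φ = q') ∧
    (∃! γ : Omega1A k q n →ₗ[k] Aqn k q n,
      (∀ w, γ w ∈ SA k q n) ∧
      q' = Ideal.span {y | ∃ i : {i : Fin q // i ≠ 0},
        y = xA k q n i.1 - γ ⟨xA k q n i.1, Submodule.subset_span ⟨i.1, i.2, rfl⟩⟩}) := by
  have hsup := Submodule.sup_eq_span_range_sup_of_basis b hb
  have hΩ : Omega1A k q n ≤ q'.restrictScalars k ⊔ m2k k q n := by
    refine le_sup_left.trans (hsup.le.trans (sup_le_sup_right ?_ _))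
    rw [hq']
    exact Submodule.span_le_restrictScalars k _ _
  choose p hp hpq using exists_xA_sub_aeval_mem hΩ
  have hnf : q' = Ideal.span (Set.range fun i => xA k q n i.1 - aeval (xA k q n 0) (p i)) := by
    refine le_antisymm ?_ (Ideal.span_le.2 (Set.range_subset_iff.2 hpq))
    subst hq'
    exact span_range_le_span_xA_sub_aeval hu (b.linearIndependent_mkQ hb) hsup hp hpq
  obtain ⟨Φ, ⟨hΦ0, hker⟩, hΦ⟩ :=
    existsUnique_algHom_ker_eq (fun i => X_dvd_of_mem_span_X_pow_Ico one_le_two (hp i)) hnf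
  exact ⟨⟨Φ, ⟨hΦ0, hker⟩, hΦ⟩, existsUnique_linearMap_SA hΦ0 hker hp hnf⟩

/-- if `q'` is an ideal of `A_{q,n}` generated by `q-1` elements `u_2, …, u_q`
of `m` whose residue classes form a basis of the image of `Ω_1` in `m/m²`, then:
(a) there is a unique `k`-algebra homomorphism `φ : A_{q,n} → k[z]/(z^n)` with `φ(x_1) = z̄`
and `ker φ = q'`; and (b) there is a unique `k`-linear map `γ : Ω_1 → A_{q,n}` with values
in `S` such that `q'` is generated by the elements `x_i - γ(x_i)`, `i = 2, …, q`. -/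
theorem nil_parameter_ideal_normal_form (k : Type) [Field k] (q n : ℕ) [NeZero q]
    (hq : 2 ≤ q) (hn : 2 ≤ n)
    (q' : Ideal (Aqn k q n))
    (u : {i : Fin q // i ≠ 0} → Aqn k q n)
    (hu : ∀ i, u i ∈ mA k q n)
    (hq' : q' = Ideal.span (Set.range u))
    (b : Module.Basis {i : Fin q // i ≠ 0} k (Submodule.map (m2k k q n).mkQ (Omega1A k q n)))
    (hb : ∀ i, (b i : Aqn k q n ⧸ m2k k q n) = (m2k k q n).mkQ (u i)) :
    (∃! φ : Aqn k q n →ₐ[k] (Polynomial k ⧸ Ideal.span {(Polynomial.X : Polynomial k) ^ n}),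
      φ (xA k q n 0) = Ideal.Quotient.mk _ Polynomial.X ∧ RingHom.ker φ = q') ∧
    (∃! γ : Omega1A k q n →ₗ[k] Aqn k q n,
      (∀ w, γ w ∈ SA k q n) ∧
      q' = Ideal.span {y | ∃ i : {i : Fin q // i ≠ 0},
        y = xA k q n i.1 - γ ⟨xA k q n i.1, Submodule.subset_span ⟨i.1, i.2, rfl⟩⟩}) :=
  nil_parameter_ideal_normal_form_general k q n q' u hu hq' b hb
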